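/- For every a ∈ ℝ, the improper integral ∫_{|s|>1} (e^{is}/s)·𝟙_{s/b>a} ds (for b ≠ 0 fixed) is bounded in modulus by a universal constant independent of a and b. -/

import Mathlib

/-!
Integrating by parts against a bounded primitive `G` of `g`,
`∫_p^q g x / x = G q / q - G p / p + ∫_p^q G x / x²`, bounds every truncation
`∫_p^q e^{is} / s` by `2 / p` uniformly in `q ≥ p > 0` and makes `R ↦ ∫_p^R e^{is} / s`
Cauchy. For `b > 0` the region is `(c, -1) ∪ (max c 1, R)` with `c = a b`; the reflection
`s ↦ -s` turns the integrand into minus its conjugate, which handles the bounded piece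
`(c, -1)` and reduces `b < 0` to `b > 0`.
-/

open Complex ComplexConjugate MeasureTheory Filter Set intervalIntegral Topology

section Dirichlet

variable {E : Type*} [NormedAddCommGroup E] [NormedSpace ℝ E] [CompleteSpace E]
  {G g : ℝ → E} {p q M : ℝ}

theorem norm_integral_inv_smul_le (hp : 0 < p) (hpq : p ≤ q)
    (hG : ∀ x ∈ Icc p q, HasDerivAt G (g x) x) (hg : IntervalIntegrable g volume p q)
    (hM : ∀ x ∈ Icc p q, ‖G x‖ ≤ M) :
    ‖∫ x in p..q, x⁻¹ • g x‖ ≤ 2 * M / p := by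
  rw [← uIcc_of_le hpq] at hG hM
  have hpos : ∀ x ∈ uIcc p q, 0 < x := fun x hx =>
    hp.trans_le (by rw [uIcc_of_le hpq] at hx; exact hx.1)
  have hinv : ∀ x ∈ uIcc p q, HasDerivAt (fun x : ℝ => x⁻¹) (-(x ^ 2)⁻¹) x :=
    fun x hx => hasDerivAt_inv (hpos x hx).ne'
  have hinvSq : ContinuousOn (fun x : ℝ => (x ^ 2)⁻¹) (uIcc p q) :=
    (continuousOn_pow 2).inv₀ fun x hx => pow_ne_zero 2 (hpos x hx).ne'
  have hsq : ∫ x in p..q, M * (x ^ 2)⁻¹ = M * (p⁻¹ - q⁻¹) := by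
    rw [intervalIntegral.integral_const_mul, integral_eq_sub_of_hasDerivAt (f := fun x => -x⁻¹)
      (fun x hx => by simpa using (hinv x hx).fun_neg) hinvSq.intervalIntegrable]
    ring
  have hrem : ‖∫ x in p..q, (-(x ^ 2)⁻¹) • G x‖ ≤ M * (p⁻¹ - q⁻¹) := by
    rw [← hsq]
    refine norm_integral_le_of_norm_le hpq (ae_of_all _ fun x hx => ?_)
      (hinvSq.const_smul M).intervalIntegrable
    rw [norm_smul, norm_neg, norm_inv, norm_pow, Real.norm_eq_abs, sq_abs, mul_comm]
    exact mul_le_mul_of_nonneg_right (hM x (uIoc_subset_uIcc (uIoc_of_le hpq ▸ hx)))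
      (by positivity)
  have hend : ∀ x ∈ uIcc p q, ‖x⁻¹ • G x‖ ≤ x⁻¹ * M := fun x hx => by
    rw [norm_smul, norm_inv, Real.norm_eq_abs, abs_of_pos (hpos x hx)]
    exact mul_le_mul_of_nonneg_left (hM x hx) (inv_nonneg.2 (hpos x hx).le)
  rw [integral_smul_deriv_eq_deriv_smul hinv hG hinvSq.neg.intervalIntegrable hg]
  have h₁ := norm_sub_le (q⁻¹ • G q - p⁻¹ • G p) (∫ x in p..q, (-(x ^ 2)⁻¹) • G x)
  have h₂ := norm_sub_le (q⁻¹ • G q) (p⁻¹ • G p)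
  have h₃ := hend q right_mem_uIcc
  have h₄ := hend p left_mem_uIcc
  rw [mul_div_assoc, div_eq_mul_inv]
  linarith

theorem exists_tendsto_integral_inv_smul (hp : 0 < p)
    (hG : ∀ x ∈ Ici p, HasDerivAt G (g x) x) (hg : ∀ q, IntervalIntegrable g volume p q)
    (hM : ∀ x ∈ Ici p, ‖G x‖ ≤ M) :
    ∃ L, Tendsto (fun R => ∫ x in p..R, x⁻¹ • g x) atTop (𝓝 L) ∧ ‖L‖ ≤ 2 * M / p := by
  set F := fun R => ∫ x in p..R, x⁻¹ • g x
  have hF : ∀ q r, p ≤ q → q ≤ r → ‖F r - F q‖ ≤ 2 * M / q := fun q r hq hqr => by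
    have hint : ∀ r, p ≤ r → IntervalIntegrable (fun x => x⁻¹ • g x) volume p r :=
      fun r hr => (hg r).continuousOn_smul <| continuousOn_inv₀.mono fun x hx =>
        (hp.trans_le (uIcc_of_le hr ▸ hx).1).ne'
    rw [integral_interval_sub_left (hint r (hq.trans hqr)) (hint q hq)]
    exact norm_integral_inv_smul_le (hp.trans_le hq) hqr
      (fun x hx => hG x (hq.trans hx.1)) ((hg q).symm.trans (hg r))
      (fun x hx => hM x (hq.trans hx.1))
  -- Nothing is assumed below `p`, so the Cauchy estimate is run on `R ↦ F (max p R)`.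
  have hcauchy : CauchySeq fun R => F (max p R) := by
    refine cauchySeq_of_le_tendsto_0' (fun R => 2 * M / max p R) (fun q r hqr => ?_)
      (tendsto_const_nhds.div_atTop (tendsto_atTop_mono (le_max_right p) tendsto_id))
    rw [dist_comm, dist_eq_norm]
    exact hF _ _ (le_max_left p q) (max_le_max_left p hqr)
  obtain ⟨L, hL⟩ := cauchySeq_tendsto_of_complete hcauchy
  have hFL : Tendsto F atTop (𝓝 L) :=
    hL.congr' ((eventually_ge_atTop p).mono fun R hR => by rw [max_eq_right hR])
  refine ⟨L, hFL, le_of_tendsto hFL.norm ((eventually_ge_atTop p).mono fun R hR => ?_)⟩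
  simpa [F] using hF p R le_rfl hR

end Dirichlet

theorem hasDerivAt_neg_I_mul_exp_I_mul (x : ℝ) :
    HasDerivAt (fun x : ℝ => -I * cexp (I * x)) (cexp (I * x)) x := by
  have := (((hasDerivAt_id (x : ℂ)).const_mul I).cexp.const_mul (-I)).comp_ofReal
  convert this using 1
  · rfl
  · simp only [id, mul_one]
    linear_combination cexp (I * x) * I_mul_I

theorem exp_I_mul_div_eq_smul (s : ℝ) : cexp (I * s) / s = s⁻¹ • cexp (I * s) := by
  rw [Complex.real_smul, ofReal_inv, div_eq_inv_mul]

theorem continuousOn_exp_I_mul_div : ContinuousOn (fun s : ℝ => cexp (I * s) / s) {0}ᶜ :=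
  (by fun_prop : Continuous fun s : ℝ => cexp (I * s)).continuousOn.div
    continuous_ofReal.continuousOn fun s hs => ofReal_ne_zero.2 hs

theorem setIntegral_neg_exp_I_mul_div (S : Set ℝ) :
    ∫ s in -S, cexp (I * s) / s = -conj (∫ s in S, cexp (I * s) / s) := by
  have hsymm : ∀ s : ℝ, cexp (I * s) / s = -conj (cexp (I * ↑(-s)) / ↑(-s)) := fun s => by
    simp [map_div₀, ← exp_conj, div_neg]
  conv_lhs => rw [funext hsymm]
  rw [MeasureTheory.integral_neg, integral_conj]
  exact congrArg (fun z => -conj z) <|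
    (Measure.measurePreserving_neg volume).setIntegral_preimage_emb
      (Homeomorph.neg ℝ).measurableEmbedding (fun s : ℝ => cexp (I * s) / s) S

theorem integrableOn_Icc_exp_I_mul_div {p q : ℝ} (h : (0 : ℝ) ∉ Icc p q) :
    IntegrableOn (fun s : ℝ => cexp (I * s) / s) (Icc p q) :=
  (continuousOn_exp_I_mul_div.mono fun _ hx h0 => h (h0 ▸ hx)).integrableOn_Icc

theorem norm_integral_exp_I_mul_div_le {p q : ℝ} (hp : 0 < p) (hpq : p ≤ q) :
    ‖∫ s in p..q, cexp (I * s) / s‖ ≤ 2 / p := by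
  simp_rw [exp_I_mul_div_eq_smul]
  simpa using norm_integral_inv_smul_le hp hpq (fun x _ => hasDerivAt_neg_I_mul_exp_I_mul x)
    ((by fun_prop : Continuous fun s : ℝ => cexp (I * s)).intervalIntegrable _ _)
    (M := 1) (fun x _ => by simp)

theorem exists_tendsto_integral_exp_I_mul_div {p : ℝ} (hp : 0 < p) :
    ∃ L, Tendsto (fun R => ∫ s in p..R, cexp (I * s) / s) atTop (𝓝 L) ∧ ‖L‖ ≤ 2 / p := by
  simp_rw [exp_I_mul_div_eq_smul]
  simpa using exists_tendsto_integral_inv_smul hp (fun x _ => hasDerivAt_neg_I_mul_exp_I_mul x)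
    (fun _ => (by fun_prop : Continuous fun s : ℝ => cexp (I * s)).intervalIntegrable _ _)
    (M := 1) (fun x _ => by simp)

theorem norm_setIntegral_Ioo_exp_I_mul_div_le (c : ℝ) :
    ‖∫ s in Ioo c (-1), cexp (I * s) / s‖ ≤ 2 := by
  rcases lt_or_ge c (-1) with hc | hc
  · rw [show Ioo c (-1) = -Ioo 1 (-c) by rw [neg_Ioo, neg_neg], setIntegral_neg_exp_I_mul_div,
      norm_neg, Complex.norm_conj, ← integral_Ioc_eq_integral_Ioo, ← integral_of_le (by linarith)]
    simpa using norm_integral_exp_I_mul_div_le one_pos (by linarith : 1 ≤ -c)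
  · simp [Ioo_eq_empty (not_lt.2 hc)]

theorem setOf_one_lt_abs_lt_and_lt_eq {c R : ℝ} (h : -R ≤ c) :
    {s : ℝ | 1 < |s| ∧ |s| < R ∧ c < s} = Ioo c (-1) ∪ Ioo (max c 1) R := by
  ext s
  simp only [mem_ofPred_eq, mem_union, mem_Ioo, lt_abs, abs_lt, max_lt_iff]
  constructor
  · rintro ⟨h1 | h1, ⟨h2, h3⟩, h4⟩
    · exact Or.inr ⟨⟨h4, h1⟩, h3⟩
    · exact Or.inl ⟨h4, by linarith⟩
  · rintro (⟨h4, h1⟩ | ⟨⟨h4, h1⟩, h3⟩)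
    · exact ⟨Or.inr (by linarith), ⟨by linarith, by linarith⟩, h4⟩
    · exact ⟨Or.inl h1, ⟨by linarith, h3⟩, h4⟩

theorem exists_tendsto_setIntegral_exp_I_mul_div (c : ℝ) :
    ∃ L, Tendsto (fun R => ∫ s in {s : ℝ | 1 < |s| ∧ |s| < R ∧ c < s}, cexp (I * s) / s)
      atTop (𝓝 L) ∧ ‖L‖ ≤ 4 := by
  obtain ⟨L, hL, hLnorm⟩ :=
    exists_tendsto_integral_exp_I_mul_div (zero_lt_one.trans_le (le_max_right c 1))
  refine ⟨(∫ s in Ioo c (-1), cexp (I * s) / s) + L, (tendsto_const_nhds.add hL).congr' ?_, ?_⟩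
  · filter_upwards [eventually_ge_atTop (-c), eventually_ge_atTop (max c 1)] with R hRc hR
    have hdisj : Disjoint (Ioo c (-1)) (Ioo (max c 1) R) :=
      disjoint_left.2 fun x h₁ h₂ => by linarith [h₁.2, h₂.1, le_max_right c 1]
    rw [setOf_one_lt_abs_lt_and_lt_eq (by linarith), setIntegral_union hdisj measurableSet_Ioo
      ((integrableOn_Icc_exp_I_mul_div fun h => by linarith [h.2]).mono_set Ioo_subset_Icc_self)
      ((integrableOn_Icc_exp_I_mul_div fun h => by linarith [h.1, le_max_right c 1]).mono_set
        Ioo_subset_Icc_self),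
      integral_of_le hR, integral_Ioc_eq_integral_Ioo]
  · calc ‖(∫ s in Ioo c (-1), cexp (I * s) / s) + L‖
        ≤ ‖∫ s in Ioo c (-1), cexp (I * s) / s‖ + ‖L‖ := norm_add_le _ _
      _ ≤ 2 + 2 := add_le_add (norm_setIntegral_Ioo_exp_I_mul_div_le c)
          (hLnorm.trans (div_le_self zero_le_two (le_max_right c 1)))
      _ = 4 := by norm_num

theorem bounded_model_oscillatory_integral :
    ∃ C : ℝ, ∀ a b : ℝ, b ≠ 0 →
      ∃ L : ℂ,
        Tendsto (fun R : ℝ => ∫ s in {s : ℝ | 1 < |s| ∧ |s| < R ∧ s / b > a},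
            Complex.exp (I * (s : ℂ)) / (s : ℂ))
          atTop (nhds L) ∧ ‖L‖ ≤ C := by
  refine ⟨4, fun a b hb => ?_⟩
  rcases hb.lt_or_gt with hb | hb
  · obtain ⟨L, hL, hLnorm⟩ := exists_tendsto_setIntegral_exp_I_mul_div (-(a * b))
    refine ⟨-conj L, ?_, by rwa [norm_neg, Complex.norm_conj]⟩
    have hset : ∀ R : ℝ, {s : ℝ | 1 < |s| ∧ |s| < R ∧ s / b > a}
        = -{s : ℝ | 1 < |s| ∧ |s| < R ∧ -(a * b) < s} := fun R => by
      ext s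
      simp [gt_iff_lt, lt_div_iff_of_neg hb]
    simp_rw [hset, setIntegral_neg_exp_I_mul_div]
    exact ((continuous_conj.tendsto L).comp hL).neg
  · obtain ⟨L, hL, hLnorm⟩ := exists_tendsto_setIntegral_exp_I_mul_div (a * b)
    exact ⟨L, by simpa only [gt_iff_lt, lt_div_iff₀ hb] using hL, hLnorm⟩
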